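/- Suppose char R = 4, N is an abelian index-2 subgroup of G, G has a unique nonidentity commutator s, x* = sx for x ∉ N, and n* = a⁻¹na for n ∈ N and a ∉ N, with σ : G → {±1} having kernel N. Then the symmetric elements (RG)⁺ under the oriented involution ♯ commute. -/

import Mathlib

/-!
The symmetric elements of `RG` are the `R`-span of the orbit sums `g + σ(g) g*` (just `g` when
`g* = g`), so it suffices that these commute pairwise. Inside `N` this is the commutativity of `N`.
For `x ∉ N` we have `x* = s x` and `σ(x) = -1`, so the orbit sum of `x` is `(1 - s) x` with
`1 - s` central; for `n ∈ N` the relation `x n = n* x` makes `x` commute with `n + n*`. For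
`x, y ∉ N` either `yx = xy` or `yx = s xy`, and `(1 - s)² s = (1 - s)²` because
`(1 - s)³ = 4 (1 - s) = 0` in characteristic `4`.
-/

/-- The oriented involution `α♯ = ∑ σ(g) α_g g*`, with `st g` standing for `g*`. -/
noncomputable def orientedSharp {R : Type*} [CommRing R] {G : Type*} [Group G]
    (st : G → G) (σ : G →* ℤˣ) (α : MonoidAlgebra R G) : MonoidAlgebra R G :=
  Finsupp.sum α.coeff fun g r => MonoidAlgebra.single (st g) (((σ g : ℤ) : R) * r)

open scoped commutatorElement

open MonoidAlgebra

section UniqueCommutator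

variable {G : Type*} [Group G] {s : G}

theorem commute_of_forall_commutatorElement_eq_one_or (hs : s ≠ 1)
    (huniq : ∀ g h : G, ⁅g, h⁆ = 1 ∨ ⁅g, h⁆ = s) (g : G) : Commute s g := by
  refine commutatorElement_eq_one_iff_mul_comm.mp <| (huniq s g).resolve_right fun h ↦ hs ?_
  rw [commutatorElement_def, mul_assoc, mul_assoc, mul_eq_left, ← mul_assoc] at h
  simpa using h

theorem mul_self_eq_one_of_forall_commutatorElement_eq_one_or (hs : s ≠ 1)
    (hex : ∃ g h : G, ⁅g, h⁆ = s) (huniq : ∀ g h : G, ⁅g, h⁆ = 1 ∨ ⁅g, h⁆ = s) :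
    s * s = 1 := by
  obtain ⟨g, h, rfl⟩ := hex
  rcases huniq h g with hhg | hhg
  · exact absurd (by rw [← commutatorElement_inv, hhg, inv_one]) hs
  · nth_rw 1 [← commutatorElement_inv h g]
    rw [hhg, inv_mul_cancel]

theorem map_commutatorElement_eq_one {H : Type*} [CommGroup H] (f : G →* H) (g h : G) :
    f ⁅g, h⁆ = 1 := by
  rw [map_commutatorElement, commutatorElement_eq_one_iff_mul_comm, mul_comm]

end UniqueCommutator

section Involution

variable {G : Type*} [Group G] {σ : G →* ℤˣ} {st : G → G} {s a : G}

theorem st_mem_ker (hin : ∀ n ∈ σ.ker, ∀ a : G, a ∉ σ.ker → st n = a⁻¹ * n * a)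
    (ha : a ∉ σ.ker) {n : G} (hn : n ∈ σ.ker) : st n ∈ σ.ker := by
  rw [hin n hn a ha]
  exact σ.normal_ker.conj_mem' n hn a

theorem map_st (hin : ∀ n ∈ σ.ker, ∀ a : G, a ∉ σ.ker → st n = a⁻¹ * n * a)
    (hout : ∀ x : G, x ∉ σ.ker → st x = s * x) (ha : a ∉ σ.ker) (hs : s ∈ σ.ker) (g : G) :
    σ (st g) = σ g := by
  by_cases hg : g ∈ σ.ker
  · rw [σ.mem_ker.mp hg, σ.mem_ker.mp (st_mem_ker hin ha hg)]
  · rw [hout g hg, map_mul, σ.mem_ker.mp hs, one_mul]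

theorem mul_st_of_mem_ker (hin : ∀ n ∈ σ.ker, ∀ a : G, a ∉ σ.ker → st n = a⁻¹ * n * a)
    {n x : G} (hn : n ∈ σ.ker) (hx : x ∉ σ.ker) : x * st n = n * x := by
  rw [hin n hn x hx]
  group

theorem st_involutive (hin : ∀ n ∈ σ.ker, ∀ a : G, a ∉ σ.ker → st n = a⁻¹ * n * a)
    (hout : ∀ x : G, x ∉ σ.ker → st x = s * x)
    (hab : ∀ n ∈ σ.ker, ∀ m ∈ σ.ker, n * m = m * n) (ha : a ∉ σ.ker) (hs : s ∈ σ.ker)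
    (hs2 : s * s = 1) : Function.Involutive st := by
  intro g
  by_cases hg : g ∈ σ.ker
  · have ha2 : a * a ∈ σ.ker := by
      rw [σ.mem_ker, map_mul, Int.units_mul_self]
    rw [hin _ (st_mem_ker hin ha hg) a ha, hin g hg a ha]
    calc a⁻¹ * (a⁻¹ * g * a) * a = (a * a)⁻¹ * (g * (a * a)) := by group
      _ = g := by rw [hab g hg _ ha2]; group
  · have hsg : s * g ∉ σ.ker := by
      rwa [σ.mem_ker, map_mul, σ.mem_ker.mp hs, one_mul]
    rw [hout g hg, hout _ hsg, ← mul_assoc, hs2, one_mul]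

theorem mem_ker_of_st_eq_self (hout : ∀ x : G, x ∉ σ.ker → st x = s * x) (hs1 : s ≠ 1) {g : G}
    (hg : st g = g) : g ∈ σ.ker := by
  by_contra hg'
  rw [hout g hg'] at hg
  exact hs1 (mul_eq_right.mp hg)

end Involution

theorem Int.cast_units_mul_self {R : Type*} [Ring R] (u : ℤˣ) :
    ((u : ℤ) : R) * ((u : ℤ) : R) = 1 := by
  rw [← Int.cast_mul, ← Units.val_mul, Int.units_mul_self, Units.val_one, Int.cast_one]

theorem commute_one_sub_mul {A : Type*} [Ring A] (h4 : (4 : A) = 0) {t a b : A}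
    (ht : t * t = 1) (hta : Commute t a) (htb : Commute t b)
    (hab : b * a = a * b ∨ b * a = t * (a * b)) :
    Commute ((1 - t) * a) ((1 - t) * b) := by
  have hsq (c d : A) (hc : Commute t c) : (1 - t) * c * ((1 - t) * d) = (1 - t) ^ 2 * (c * d) := by
    rw [mul_assoc, ← mul_assoc c, ← ((Commute.one_left c).sub_left hc).eq]
    noncomm_ring
  have hcube : (1 - t) ^ 2 * t = (1 - t) ^ 2 := by
    -- `(1 - t) ^ 2 * (t - 1) = -(1 - t) ^ 3 = 4 * (t - 1)` once `t * t = 1`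
    have e : (1 - t) ^ 2 * t - (1 - t) ^ 2 = 4 * (t - 1) + (t * t - 1) * (t - 3) := by noncomm_ring
    rwa [h4, ht, sub_self, zero_mul, zero_mul, add_zero, sub_eq_zero] at e
  unfold Commute SemiconjBy
  rw [hsq a b hta, hsq b a htb]
  rcases hab with hab | hab <;> rw [hab]
  rw [← mul_assoc _ t, hcube]

theorem commute_of_mem_span {R A : Type*} [CommSemiring R] [Semiring A] [Algebra R A] {S : Set A}
    (hS : ∀ a ∈ S, ∀ b ∈ S, Commute a b) {u v : A} (hu : u ∈ Submodule.span R S)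
    (hv : v ∈ Submodule.span R S) : Commute u v :=
  Algebra.commute_of_mem_adjoin_of_forall_mem_commute (Algebra.span_le_adjoin R S hv) fun b hb ↦
    (Algebra.commute_of_mem_adjoin_of_forall_mem_commute (Algebra.span_le_adjoin R S hu)
      fun a ha ↦ hS b hb a ha).symm

section OrbitSum

variable {R : Type*} [CommRing R] {G : Type*} [Group G] {st : G → G} {σ : G →* ℤˣ}

theorem coeff_orientedSharp (hst : Function.Involutive st) (α : MonoidAlgebra R G) (g : G) :
    (orientedSharp st σ α).coeff g = ((σ (st g) : ℤ) : R) * α.coeff (st g) := by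
  classical
  rw [orientedSharp, coeff_finsuppSum, Finsupp.sum_apply]
  have hiff (h : G) : st h = g ↔ h = st g := ⟨fun e ↦ e ▸ (hst h).symm, fun e ↦ e ▸ hst g⟩
  simp only [coeff_single, Finsupp.single_apply, hiff, Finsupp.sum_ite_eq', Finsupp.mem_support_iff]
  split_ifs <;> simp_all

theorem coeff_st_of_orientedSharp_eq (hst : Function.Involutive st) {γ : MonoidAlgebra R G}
    (hγ : orientedSharp st σ γ = γ) (g : G) :
    γ.coeff (st g) = ((σ g : ℤ) : R) * γ.coeff g := by
  conv_lhs => rw [← hγ]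
  rw [coeff_orientedSharp hst, hst]

variable (st σ) in
open Classical in
noncomputable def orbitSum (g : G) : MonoidAlgebra R G :=
  single g 1 + single (st g) (if st g = g then 0 else ((σ g : ℤ) : R))

theorem coeff_orbitSum [DecidableEq G] (g h : G) :
    (orbitSum st σ g : MonoidAlgebra R G).coeff h =
      if h = g then 1 else if h = st g then ((σ g : ℤ) : R) else 0 := by
  simp only [orbitSum, coeff_add, coeff_single, Finsupp.add_apply, Finsupp.single_apply]
  grind

theorem coeff_orbitSum_st [DecidableEq G] (hst : Function.Involutive st)
    (hσ : ∀ g, σ (st g) = σ g) (hfix : ∀ g, st g = g → σ g = 1) (g h : G) :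
    (orbitSum st σ g : MonoidAlgebra R G).coeff (st h) =
      ((σ h : ℤ) : R) * (orbitSum st σ g).coeff h := by
  have h1 : st h = g ↔ h = st g := ⟨fun e ↦ e ▸ (hst h).symm, fun e ↦ e ▸ hst g⟩
  simp only [coeff_orbitSum, h1, hst.injective.eq_iff]
  split_ifs with h2 h3 h3 <;> subst_vars
  · simp [hfix _ h2.symm]
  · rw [hσ, Int.cast_units_mul_self]
  · rw [mul_one]
  · rw [mul_zero]

theorem mem_span_orbitSum (hst : Function.Involutive st) (hσ : ∀ g, σ (st g) = σ g)
    (hfix : ∀ g, st g = g → σ g = 1) {γ : MonoidAlgebra R G}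
    (hγ : ∀ g, γ.coeff (st g) = ((σ g : ℤ) : R) * γ.coeff g) :
    γ ∈ Submodule.span R (Set.range (orbitSum st σ)) := by
  classical
  induction hS : γ.coeff.support using Finset.strongInduction generalizing γ with
  | H S ih =>
  rcases S.eq_empty_or_nonempty with rfl | ⟨g, hg⟩
  · rw [Finsupp.support_eq_empty, coeff_eq_zero] at hS
    exact hS ▸ Submodule.zero_mem _
  set δ := γ - γ.coeff g • orbitSum st σ g with hδ
  have hδγ : ∀ h, δ.coeff h = if h = g ∨ h = st g then 0 else γ.coeff h := by
    intro h
    simp only [hδ, coeff_sub, coeff_smul, Finsupp.sub_apply, Finsupp.smul_apply, coeff_orbitSum,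
      smul_eq_mul]
    by_cases h1 : h = g
    · simp [h1]
    by_cases h2 : h = st g
    · subst h2
      simp [h1, hγ, mul_comm]
    · simp [h1, h2]
  have hδS : δ.coeff.support ⊂ S := by
    refine lt_of_le_of_lt (fun h hh ↦ ?_) (Finset.erase_ssubset hg)
    rw [Finsupp.mem_support_iff, hδγ] at hh
    split_ifs at hh with h1
    · exact absurd rfl hh
    · exact Finset.mem_erase.mpr ⟨fun e ↦ h1 (Or.inl e), hS ▸ Finsupp.mem_support_iff.mpr hh⟩
  have hδsym : ∀ h, δ.coeff (st h) = ((σ h : ℤ) : R) * δ.coeff h := by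
    intro h
    simp only [hδ, coeff_sub, coeff_smul, Finsupp.sub_apply, Finsupp.smul_apply, hγ,
      coeff_orbitSum_st hst hσ hfix, smul_eq_mul]
    ring
  rw [← sub_add_cancel γ (γ.coeff g • orbitSum st σ g)]
  exact add_mem (ih _ hδS hδsym rfl) (Submodule.smul_mem _ _ (Submodule.subset_span ⟨g, rfl⟩))

theorem commute_orbitSum_of_commute {g h : G} (h₁ : Commute g h) (h₂ : Commute g (st h))
    (h₃ : Commute (st g) h) (h₄ : Commute (st g) (st h)) :
    Commute (orbitSum st σ g : MonoidAlgebra R G) (orbitSum st σ h) := by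
  unfold orbitSum
  exact .add_left (.add_right (single_commute_single h₁ (.all _ _))
      (single_commute_single h₂ (.all _ _)))
    (.add_right (single_commute_single h₃ (.all _ _)) (single_commute_single h₄ (.all _ _)))

theorem commute_single_orbitSum {x g : G} (h₁ : x * g = st g * x) (h₂ : x * st g = g * x)
    (hσ : σ g = 1) : Commute (single x (1 : R)) (orbitSum st σ g) := by
  unfold orbitSum
  split_ifs with hg
  · rw [hg] at h₁
    simpa using single_commute_single (r₁ := (1 : R)) (r₂ := 1) h₁
  · simp only [Commute, SemiconjBy, mul_add, add_mul, single_mul_single, hσ, h₁, h₂]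
    simp [add_comm]

theorem orbitSum_eq_one_sub_mul {s x : G} (hs : s ≠ 1) (hx : st x = s * x) (hσ : σ x = -1) :
    (orbitSum st σ x : MonoidAlgebra R G) = (1 - single s 1) * single x 1 := by
  have hx' : st x ≠ x := fun e ↦ hs (mul_eq_right.mp (hx ▸ e))
  rw [orbitSum, if_neg hx', hx, hσ, sub_mul, one_mul, single_mul_single, one_mul]
  simp [sub_eq_add_neg]

end OrbitSum

theorem commute_orbitSum {R : Type*} [CommRing R] {G : Type*} [Group G] {s : G} {σ : G →* ℤˣ}
    {st : G → G} (h4 : (4 : R) = 0) (hs1 : s ≠ 1) (hs2 : s * s = 1)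
    (huniq : ∀ g h : G, ⁅g, h⁆ = 1 ∨ ⁅g, h⁆ = s)
    (hab : ∀ n ∈ σ.ker, ∀ m ∈ σ.ker, n * m = m * n)
    (hout : ∀ x : G, x ∉ σ.ker → st x = s * x)
    (hin : ∀ n ∈ σ.ker, ∀ a : G, a ∉ σ.ker → st n = a⁻¹ * n * a)
    (hst : Function.Involutive st) {a : G} (ha : a ∉ σ.ker) (g h : G) :
    Commute (orbitSum st σ g : MonoidAlgebra R G) (orbitSum st σ h) := by
  have hsc : ∀ y, Commute (single s (1 : R)) y :=
    single_commute (commute_of_forall_commutatorElement_eq_one_or hs1 huniq) (.one_left)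
  have hσ (x : G) (hx : x ∉ σ.ker) : σ x = -1 := (Int.units_eq_one_or (σ x)).resolve_left hx
  have mixed (n x : G) (hn : n ∈ σ.ker) (hx : x ∉ σ.ker) :
      Commute (orbitSum st σ x : MonoidAlgebra R G) (orbitSum st σ n) := by
    rw [orbitSum_eq_one_sub_mul hs1 (hout x hx) (hσ x hx)]
    refine .mul_left (.sub_left (.one_left _) ?_) ?_
    · exact hsc _
    · refine commute_single_orbitSum ?_ (mul_st_of_mem_ker hin hn hx) (σ.mem_ker.mp hn)
      simpa only [hst n] using mul_st_of_mem_ker hin (st_mem_ker hin ha hn) hx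
  by_cases hg : g ∈ σ.ker <;> by_cases hh : h ∈ σ.ker
  · have hg' := st_mem_ker hin ha hg
    have hh' := st_mem_ker hin ha hh
    exact commute_orbitSum_of_commute (hab _ hg _ hh) (hab _ hg _ hh') (hab _ hg' _ hh)
      (hab _ hg' _ hh')
  · exact (mixed g h hg hh).symm
  · exact mixed h g hh hg
  · rw [orbitSum_eq_one_sub_mul hs1 (hout g hg) (hσ g hg),
      orbitSum_eq_one_sub_mul hs1 (hout h hh) (hσ h hh)]
    refine commute_one_sub_mul (by rw [ofNat_def, h4, single_zero])
      (by rw [single_mul_single, hs2, one_mul, one_def]) (hsc _) (hsc _) ?_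
    simp only [single_mul_single, one_mul]
    refine (huniq h g).imp (fun e ↦ ?_) fun e ↦ ?_
    · rw [commutatorElement_eq_one_iff_mul_comm.mp e]
    · rw [← e]
      group

/-- if `char R = 4`, `N = ker σ` is abelian of index 2, `G` has
a unique nonidentity commutator `s`, `x* = sx` for `x ∉ N`, and `n* = a⁻¹na`
for `n ∈ N`, `a ∉ N`, then the symmetric elements of `RG` commute. -/
theorem symmetric_commute_case_two {R : Type*} [CommRing R] {G : Type*} [Group G]
    (hchar : ringChar R = 4)
    (s : G) (hs1 : s ≠ 1)
    (hex : ∃ g h : G, ⁅g, h⁆ = s)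
    (huniq : ∀ g h : G, ⁅g, h⁆ = 1 ∨ ⁅g, h⁆ = s)
    (σ : G →* ℤˣ) (hidx : σ.ker.index = 2)
    (hab : ∀ n ∈ σ.ker, ∀ m ∈ σ.ker, n * m = m * n)
    (st : G → G)
    (hout : ∀ x : G, x ∉ σ.ker → st x = s * x)
    (hin : ∀ n ∈ σ.ker, ∀ a : G, a ∉ σ.ker → st n = a⁻¹ * n * a) :
    ∀ α β : MonoidAlgebra R G,
      orientedSharp st σ α = α → orientedSharp st σ β = β → α * β = β * α := by
  intro α β hα hβ
  have h4 : (4 : R) = 0 := by exact_mod_cast hchar ▸ ringChar.Nat.cast_ringChar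
  have hs2 := mul_self_eq_one_of_forall_commutatorElement_eq_one_or hs1 hex huniq
  have hsN : s ∈ σ.ker := by
    obtain ⟨g, h, rfl⟩ := hex
    exact map_commutatorElement_eq_one σ g h
  obtain ⟨a, ha⟩ : ∃ a, a ∉ σ.ker := by
    by_contra! h
    rw [← σ.ker.eq_top_iff', ← Subgroup.index_eq_one] at h
    omega
  have hst := st_involutive hin hout hab ha hsN hs2
  have hσ := map_st hin hout ha hsN
  have hspan (γ : MonoidAlgebra R G) (hγ : orientedSharp st σ γ = γ) :=
    mem_span_orbitSum hst hσ (fun g hg ↦ mem_ker_of_st_eq_self hout hs1 hg)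
      (coeff_st_of_orientedSharp_eq hst hγ)
  refine (commute_of_mem_span ?_ (hspan α hα) (hspan β hβ)).eq
  rintro _ ⟨g, rfl⟩ _ ⟨h, rfl⟩
  exact commute_orbitSum h4 hs1 hs2 huniq hab hout hin hst ha g h
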